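/- Let p be an odd prime. Then for all integers n ≥ 0 and k ≥ 0, b(2·p^{2k+2}·n + (p^{2k+2} − 1)/2) ≡ (−1)^{(k+1)(p−1)/2} · p^{k+1} · b(2n) (mod 4). (Since p is odd this is equivalent to the relation b(2n) ≡ (−1)^{(k+1)(1−p)/2} p^{−k−1} b(2p^{2k+2}n + (p^{2k+2}−1)/2) (mod 4), where p^{−1} denotes the inverse of p modulo 4.) -/

import Mathlib

open PowerSeries Finset

/-- The `n`-th summand `q^n (−q;q²)_n / (q;q²)_{n+1}` of the second order mock theta
function `B(q)`, as a formal power series over `ℤ`.  The denominator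
`(q;q²)_{n+1} = ∏_{j=0}^{n} (1 - q^{2j+1})` has constant coefficient `1`, hence is
invertible; we use `PowerSeries.invOfUnit`. -/
noncomputable def mockBterm (n : ℕ) : PowerSeries ℤ :=
  (X : PowerSeries ℤ) ^ n
    * (∏ j ∈ range n, (1 + (X : PowerSeries ℤ) ^ (2 * j + 1)))
    * PowerSeries.invOfUnit (∏ j ∈ range (n + 1), (1 - (X : PowerSeries ℤ) ^ (2 * j + 1))) 1

/-- `B(q) = Σ_{n≥0} q^n (−q;q²)_n/(q;q²)_{n+1}`.  The `n`-th summand is divisible by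
`q^n`, so the `N`-th coefficient of `B(q)` only receives contributions from the
summands with `n ≤ N`; this defines the (formal) infinite sum coefficientwise. -/
noncomputable def mockB : PowerSeries ℤ :=
  PowerSeries.mk fun N => ∑ n ∈ range (N + 1), PowerSeries.coeff (R := ℤ) N (mockBterm n)

/-- `b n` is the coefficient of `q^n` in `B(q)`. -/
noncomputable def b (n : ℕ) : ℤ := PowerSeries.coeff (R := ℤ) n mockB

/-!
Modulo 4 we have `1 + q^s = (1 - q^s)(1 + 2q^s/(1 - q^s))` and `∏ (1 + 2xⱼ) = 1 + 2 ∑ xⱼ`, so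
the `n`-th summand of `B(q)` becomes `q^n/(1 - q^{2n+1}) · (1 + 2 ∑_{j<n} q^{2j+1}/(1 - q^{2j+1}))`.
Reading off coefficients, `b(N) ≡ d(2N+1) + 2T(N) (mod 4)`, where `T(N)` counts the pairs of pairs
`((j,t),(a,c))` of weight `N`, and the weight is symmetric under swapping the two pairs. So `T(N)`
has the parity of the number of diagonal solutions, and when `2N+1 ≡ 1 (mod 4)` these correspond
to the factorisations `2N+1 = de` with `d < e`. Since `d(M) = 2 #{de = M, d < e} + [M square]`,
this gives `b(2n) ≡ [4n+1 is a square] (mod 4)`. The theorem follows because the argument on the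
left is `2n'` with `4n'+1 = p^{2k+2}(4n+1)`, and `(-1)^{(p-1)/2} p ≡ 1 (mod 4)`.
-/

section GeomXPow

variable {R : Type*}

def geomXPow [Semiring R] (m : ℕ) : R⟦X⟧ := mk fun i => if m ∣ i then 1 else 0

theorem one_sub_X_pow_mul_geomXPow [CommRing R] {m : ℕ} (hm : 0 < m) :
    (1 - X ^ m) * (geomXPow m : R⟦X⟧) = 1 := by
  ext N
  rw [sub_mul, one_mul, map_sub, coeff_X_pow_mul', geomXPow, coeff_mk, coeff_mk, coeff_one]
  rcases Nat.eq_zero_or_pos N with rfl | hN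
  · simp [hm.not_ge]
  · by_cases hmN : m ≤ N
    · obtain ⟨k, rfl⟩ := Nat.exists_eq_add_of_le' hmN
      simp [Nat.dvd_add_self_right, hm.ne']
    · simp [hmN, hN.ne', Nat.not_dvd_of_pos_of_lt hN (not_le.mp hmN)]

theorem one_add_X_pow_mul_geomXPow [CommRing R] {m : ℕ} (hm : 0 < m) :
    (1 + X ^ m) * (geomXPow m : R⟦X⟧) = 1 + 2 * (X ^ m * geomXPow m) := by
  linear_combination one_sub_X_pow_mul_geomXPow (R := R) hm

theorem coeff_mul_geomXPow [Semiring R] (F : R⟦X⟧) {m K B : ℕ} (hm : 0 < m) (hK : K < B) :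
    coeff K (F * geomXPow m) =
      ∑ c ∈ range B, if m * c ≤ K then coeff (K - m * c) F else 0 := by
  simp only [coeff_mul, geomXPow, coeff_mk, mul_ite, mul_one, mul_zero]
  rw [← sum_filter, ← sum_filter]
  refine (sum_bij (fun c _ => (K - m * c, m * c)) ?_ ?_ ?_ fun _ _ => rfl).symm
  · intro c hc
    simp only [mem_filter, HasAntidiagonal.mem_antidiagonal] at hc ⊢
    exact ⟨by omega, dvd_mul_right m c⟩
  · intro c _ c' _ h
    exact Nat.eq_of_mul_eq_mul_left hm (Prod.ext_iff.mp h).2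
  · rintro ⟨i, _⟩ hic
    simp only [mem_filter, HasAntidiagonal.mem_antidiagonal] at hic
    obtain ⟨hsum, hdvd⟩ := hic
    obtain ⟨c, rfl⟩ := exists_eq_mul_right_of_dvd hdvd
    have : c ≤ m * c := Nat.le_mul_of_pos_left c hm
    refine ⟨c, ?_, ?_⟩
    · simp only [mem_filter, mem_range]
      omega
    · simp only [Prod.mk.injEq, and_true]
      omega

theorem coeff_X_pow_mul_geomXPow [Semiring R] {e v N B : ℕ} (hv : 0 < v) (hN : N < B) :
    coeff (R := R) N (X ^ e * (geomXPow v : R⟦X⟧)) = #{a ∈ range B | e + v * a = N} := by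
  rw [coeff_mul_geomXPow _ hv hN, ← sum_boole]
  refine sum_congr rfl fun a _ => ?_
  rw [coeff_X_pow]
  split_ifs <;> first | rfl | omega

theorem coeff_X_pow_mul_geomXPow_mul_geomXPow [Semiring R] {e v s N B : ℕ} (hv : 0 < v)
    (hs : 0 < s) (hN : N < B) :
    coeff (R := R) N (X ^ e * geomXPow v * (geomXPow s : R⟦X⟧)) =
      #{y ∈ range B ×ˢ range B | e + v * y.1 + s * y.2 = N} := by
  rw [coeff_mul_geomXPow _ hs hN, card_filter, sum_product_right, Nat.cast_sum]
  refine sum_congr rfl fun c _ => ?_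
  split_ifs with hc
  · rw [coeff_X_pow_mul_geomXPow hv (by omega : N - s * c < B), card_filter]
    congr 1
    exact sum_congr rfl fun a _ => if_congr (by dsimp only; omega) rfl rfl
  · rw [sum_eq_zero fun a _ => if_neg (by dsimp only; omega), Nat.cast_zero]

theorem prod_one_add_two_mul_of_four_eq_zero [CommRing R] {ι : Type*} (h4 : (4 : R) = 0)
    (s : Finset ι) (f : ι → R) : ∏ i ∈ s, (1 + 2 * f i) = 1 + 2 * ∑ i ∈ s, f i := by
  classical
  induction s using Finset.induction_on with
  | empty => simp
  | insert i s hi ih =>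
    rw [prod_insert hi, sum_insert hi, ih]
    linear_combination (f i * ∑ j ∈ s, f j) * h4

end GeomXPow

theorem Finset.card_modEq_two_card_filter_fixed {α : Type*} [DecidableEq α] {s : Finset α}
    {f : α → α} (hf : ∀ x ∈ s, f x ∈ s) (hff : ∀ x ∈ s, f (f x) = x) :
    #s ≡ #{x ∈ s | f x = x} [MOD 2] := by
  have hmoved : ((#{x ∈ s | ¬f x = x} : ℕ) : ZMod 2) = 0 := by
    rw [card_eq_sum_ones, Nat.cast_sum, Nat.cast_one]
    refine sum_involution (fun x _ => f x) (fun _ _ => by decide)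
      (fun x hx _ => (mem_filter.mp hx).2) (fun x hx => ?_) (fun x hx => hff x (mem_filter.mp hx).1)
    obtain ⟨hxs, hfx⟩ := mem_filter.mp hx
    exact mem_filter.mpr ⟨hf x hxs, by rw [hff x hxs]; exact Ne.symm hfx⟩
  have := card_filter_add_card_filter_not (s := s) (fun x => f x = x)
  have := (ZMod.natCast_eq_zero_iff _ 2).mp hmoved
  unfold Nat.ModEq
  omega

theorem Finset.sum_range_sum_range_eq_sum_filter {M : Type*} [AddCommMonoid M] (f : ℕ → ℕ → M)
    (B : ℕ) : ∑ n ∈ range B, ∑ j ∈ range n, f n j =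
      ∑ x ∈ range B ×ˢ range B with x.1 + x.2 + 1 < B, f (x.1 + x.2 + 1) x.1 := by
  rw [sum_sigma']
  refine sum_nbij' (fun p => (p.2, p.1 - p.2 - 1)) (fun x => ⟨x.1 + x.2 + 1, x.1⟩)
    ?_ ?_ ?_ ?_ ?_
  · rintro ⟨n, j⟩ h
    simp only [mem_sigma, mem_filter, mem_product, mem_range] at h ⊢
    omega
  · rintro ⟨j, t⟩ h
    simp only [mem_sigma, mem_filter, mem_product, mem_range] at h ⊢
    omega
  · rintro ⟨n, j⟩ h
    simp only [mem_sigma, mem_range, Sigma.mk.injEq, heq_eq_eq, and_true] at h ⊢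
    omega
  · rintro ⟨j, t⟩ -
    simp only [Prod.mk.injEq, true_and]
    omega
  · rintro ⟨n, j⟩ h
    simp only [mem_sigma, mem_range] at h
    dsimp only
    congr 1
    omega

theorem Nat.card_divisorsAntidiagonal_eq_two_mul_card_lt_add_ite {M : ℕ} (hM : M ≠ 0) :
    #M.divisorsAntidiagonal =
      2 * #{d ∈ M.divisorsAntidiagonal | d.1 < d.2} + if IsSquare M then 1 else 0 := by
  set A := M.divisorsAntidiagonal
  have hsplit : #A = #{d ∈ A | d.1 < d.2} + #{d ∈ A | d.2 < d.1} + #{d ∈ A | d.1 = d.2} := by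
    rw [card_filter, card_filter, card_filter, ← sum_add_distrib, ← sum_add_distrib,
      card_eq_sum_ones]
    exact sum_congr rfl fun d _ => by split_ifs <;> omega
  have hswap : #{d ∈ A | d.2 < d.1} = #{d ∈ A | d.1 < d.2} :=
    card_nbij' Prod.swap Prod.swap (fun d hd => by simpa [A, mul_comm] using hd)
      (fun d hd => by simpa [A, mul_comm] using hd) (fun _ _ => rfl) (fun _ _ => rfl)
  have hdiag : #{d ∈ A | d.1 = d.2} = if IsSquare M then 1 else 0 := by
    split_ifs with hsq
    · obtain ⟨r, rfl⟩ := hsq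
      rw [card_eq_one]
      refine ⟨(r, r), ?_⟩
      ext ⟨d, e⟩
      simp only [A, mem_filter, Nat.mem_divisorsAntidiagonal, mem_singleton, Prod.mk.injEq]
      constructor
      · rintro ⟨⟨hde, -⟩, rfl⟩
        exact ⟨Nat.mul_self_inj.mp hde, Nat.mul_self_inj.mp hde⟩
      · rintro ⟨rfl, rfl⟩
        exact ⟨⟨rfl, hM⟩, rfl⟩
    · refine Finset.card_eq_zero.mpr (filter_eq_empty_iff.mpr fun d hd hdd => hsq ⟨d.1, ?_⟩)
      rw [(Nat.mem_divisorsAntidiagonal.mp hd).1.symm, hdd]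
  omega

theorem Nat.isSquare_sq_mul_iff {r M : ℕ} (hr : r ≠ 0) : IsSquare (r ^ 2 * M) ↔ IsSquare M := by
  rw [← Rat.isSquare_natCast_iff, ← Rat.isSquare_natCast_iff (n := M)]
  push_cast
  refine ⟨fun h => ?_, (IsSquare.sq _).mul⟩
  simpa [hr] using h.div (IsSquare.sq (r : ℚ))

theorem ZMod.neg_one_pow_div_two_mul_eq_one {p : ℕ} (hp : Odd p) :
    (-1 : ZMod 4) ^ ((p - 1) / 2) * p = 1 := by
  obtain ⟨m, rfl⟩ := hp
  rw [show (2 * m + 1 - 1) / 2 = m by omega]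
  rcases Nat.even_or_odd' m with ⟨r, rfl | rfl⟩
  · rw [pow_mul]; push_cast; ring_nf; reduce_mod_char
  · rw [pow_succ, pow_mul]; push_cast; ring_nf; reduce_mod_char

theorem map_mockBterm (n : ℕ) :
    map (Int.castRingHom (ZMod 4)) (mockBterm n) =
      X ^ n * geomXPow (2 * n + 1) *
        (1 + 2 * ∑ j ∈ range n, X ^ (2 * j + 1) * geomXPow (2 * j + 1)) := by
  set φ := map (Int.castRingHom (ZMod 4))
  set D := ∏ j ∈ range (n + 1), (1 - (X : ℤ⟦X⟧) ^ (2 * j + 1))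
  have hφD : φ D = ∏ j ∈ range (n + 1), (1 - X ^ (2 * j + 1)) := by simp [φ, D, map_prod]
  have hinv : φ (invOfUnit D 1) = ∏ j ∈ range (n + 1), geomXPow (2 * j + 1) := by
    refine (left_inv_eq_right_inv (a := φ D) ?_ ?_).symm
    · rw [hφD, ← prod_mul_distrib]
      exact prod_eq_one fun j _ => by rw [mul_comm, one_sub_X_pow_mul_geomXPow (by omega)]
    · rw [← map_mul, mul_invOfUnit D 1 (by simp [D, map_prod]), map_one]
  have h4 : (4 : (ZMod 4)⟦X⟧) = 0 := by rw [← map_ofNat C 4]; exact map_zero C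
  rw [← prod_one_add_two_mul_of_four_eq_zero h4, mockBterm, map_mul, hinv]
  simp only [map_mul, map_pow, map_prod, map_add, map_one, φ, map_X]
  rw [prod_range_succ, ← prod_congr rfl fun j _ => one_add_X_pow_mul_geomXPow (by omega),
    prod_mul_distrib]
  ring

theorem coeff_map_mockBterm (n N : ℕ) :
    coeff N (map (Int.castRingHom (ZMod 4)) (mockBterm n)) =
      ((#{a ∈ range (N + 1) | n + (2 * n + 1) * a = N} + 2 * ∑ j ∈ range n,
        #{y ∈ range (N + 1) ×ˢ range (N + 1) |
          n + (2 * j + 1) + (2 * n + 1) * y.1 + (2 * j + 1) * y.2 = N} : ℕ) : ZMod 4) := by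
  have coeff_two_mul (F : (ZMod 4)⟦X⟧) : coeff N (2 * F) = 2 * coeff N F := by
    rw [two_mul, two_mul, map_add]
  rw [map_mockBterm, mul_add, mul_one, map_add, mul_left_comm _ (2 : (ZMod 4)⟦X⟧),
    coeff_two_mul, mul_sum, map_sum, coeff_X_pow_mul_geomXPow (by omega) N.lt_succ_self]
  push_cast
  congr 2
  refine sum_congr rfl fun j _ => ?_
  rw [show X ^ n * geomXPow (2 * n + 1) * (X ^ (2 * j + 1) * geomXPow (2 * j + 1)) =
    X ^ (n + (2 * j + 1)) * geomXPow (2 * n + 1) * (geomXPow (2 * j + 1) : (ZMod 4)⟦X⟧) by ring]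
  exact coeff_X_pow_mul_geomXPow_mul_geomXPow (by omega) (by omega) N.lt_succ_self

/-- The exponent `n + (2j+1) + (2n+1)a + (2j+1)c` of the monomial
`q^n · q^{(2n+1)a} · q^{(2j+1)(c+1)}` in the summand `n = j + t + 1` of `B(q)` mod 4. -/
def quadWeight (x y : ℕ × ℕ) : ℕ :=
  (x.1 + x.2 + 1) + (2 * x.1 + 1) + (2 * (x.1 + x.2 + 1) + 1) * y.1 + (2 * x.1 + 1) * y.2

theorem quadWeight_comm (x y : ℕ × ℕ) : quadWeight x y = quadWeight y x := by
  unfold quadWeight; ring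

def quadsOfWeight (N : ℕ) : Finset ((ℕ × ℕ) × ℕ × ℕ) :=
  {z ∈ (range (N + 1) ×ˢ range (N + 1)) ×ˢ (range (N + 1) ×ˢ range (N + 1)) |
    quadWeight z.1 z.2 = N}

theorem mem_quadsOfWeight {N : ℕ} {z : (ℕ × ℕ) × ℕ × ℕ} :
    z ∈ quadsOfWeight N ↔ quadWeight z.1 z.2 = N := by
  obtain ⟨⟨j, t⟩, a, c⟩ := z
  simp only [quadsOfWeight, mem_filter, mem_product, mem_range]
  refine ⟨And.right, fun h => ⟨?_, h⟩⟩
  unfold quadWeight at h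
  refine ⟨⟨?_, ?_⟩, ?_, ?_⟩ <;> nlinarith

theorem card_filter_swap_eq_self_quadsOfWeight {N : ℕ} (hN : Even N) :
    #{z ∈ quadsOfWeight N | z.swap = z} =
      #{d ∈ (2 * N + 1).divisorsAntidiagonal | d.1 < d.2} := by
  refine card_bij (fun z _ => (2 * z.1.1 + 1, 2 * z.1.1 + 4 * z.1.2 + 5)) ?_ ?_ ?_
  · rintro ⟨⟨j, t⟩, y⟩ hz
    simp only [mem_filter, mem_quadsOfWeight, Prod.swap_prod_mk, Prod.mk.injEq] at hz
    obtain ⟨hw, rfl, -⟩ := hz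
    simp only [mem_filter, Nat.mem_divisorsAntidiagonal]
    refine ⟨⟨?_, by omega⟩, by omega⟩
    rw [← hw]; unfold quadWeight; ring
  · rintro ⟨⟨j, t⟩, y⟩ hz ⟨⟨j', t'⟩, y'⟩ hz' h
    simp only [mem_filter, Prod.swap_prod_mk, Prod.mk.injEq] at hz hz' h
    obtain ⟨-, rfl, -⟩ := hz
    obtain ⟨-, rfl, -⟩ := hz'
    simp only [Prod.mk.injEq]
    omega
  · rintro ⟨d, e⟩ hde
    simp only [mem_filter, Nat.mem_divisorsAntidiagonal] at hde
    obtain ⟨⟨hde, -⟩, hlt⟩ := hde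
    obtain ⟨r, rfl⟩ := hN
    have hmod := Nat.mul_mod d e 4
    rw [hde] at hmod
    have hd2 : d % 2 = 1 := Nat.odd_iff.mp (Nat.odd_mul.mp (hde ▸ odd_two_mul_add_one _)).1
    have he2 : e % 2 = 1 := Nat.odd_iff.mp (Nat.odd_mul.mp (hde ▸ odd_two_mul_add_one _)).2
    have hde4 : d % 4 = e % 4 := by
      have : d % 4 < 4 := Nat.mod_lt _ (by norm_num)
      have : e % 4 < 4 := Nat.mod_lt _ (by norm_num)
      interval_cases hd : d % 4 <;> interval_cases he : e % 4 <;> omega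
    -- `de ≡ 1 (mod 4)` forces `d ≡ e (mod 4)`, so `e = d + 4(t+1)`.
    obtain ⟨j, rfl⟩ : ∃ j, d = 2 * j + 1 := ⟨d / 2, by omega⟩
    obtain ⟨t, rfl⟩ : ∃ t, e = 2 * j + 4 * t + 5 := ⟨(e - 2 * j - 1) / 4 - 1, by omega⟩
    refine ⟨((j, t), (j, t)), ?_, rfl⟩
    simp only [mem_filter, mem_quadsOfWeight, Prod.swap_prod_mk, and_true]
    have : 2 * quadWeight (j, t) (j, t) + 1 = (2 * j + 1) * (2 * j + 4 * t + 5) := by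
      unfold quadWeight; ring
    omega

theorem card_filter_eq_card_divisorsAntidiagonal (N : ℕ) :
    #{x ∈ range (N + 1) ×ˢ range (N + 1) | x.1 + (2 * x.1 + 1) * x.2 = N} =
      #(2 * N + 1).divisorsAntidiagonal := by
  refine card_bij (fun x _ => (2 * x.1 + 1, 2 * x.2 + 1)) ?_ ?_ ?_
  · rintro ⟨n, a⟩ h
    rw [mem_filter] at h
    rw [Nat.mem_divisorsAntidiagonal, ← h.2]
    exact ⟨by ring, by omega⟩
  · rintro ⟨n, a⟩ - ⟨n', a'⟩ - h
    simp only [Prod.mk.injEq] at h ⊢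
    omega
  · rintro ⟨d, e⟩ h
    rw [Nat.mem_divisorsAntidiagonal] at h
    obtain ⟨⟨n, rfl⟩, ⟨a, rfl⟩⟩ := Nat.odd_mul.mp (h.1 ▸ odd_two_mul_add_one N)
    have hN : 2 * (n + (2 * n + 1) * a) + 1 = 2 * N + 1 := by rw [← h.1]; ring
    have ha : a ≤ (2 * n + 1) * a := Nat.le_mul_of_pos_left a (by omega)
    refine ⟨(n, a), ?_, rfl⟩
    simp only [mem_filter, mem_product, mem_range]
    omega

theorem intCast_b (N : ℕ) :
    ((b N : ℤ) : ZMod 4) =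
      ((#{x ∈ range (N + 1) ×ˢ range (N + 1) | x.1 + (2 * x.1 + 1) * x.2 = N} +
        2 * #(quadsOfWeight N) : ℕ) : ZMod 4) := by
  have hb : ((b N : ℤ) : ZMod 4) =
      ∑ n ∈ range (N + 1), coeff N (map (Int.castRingHom (ZMod 4)) (mockBterm n)) := by
    simp only [b, mockB, coeff_mk, Int.cast_sum, coeff_map, eq_intCast]
  simp only [hb, coeff_map_mockBterm, ← Nat.cast_sum, sum_add_distrib, ← mul_sum]
  congr 2
  · rw [card_filter, sum_product]
    exact sum_congr rfl fun n _ => by rw [card_filter]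
  · congr 1
    rw [sum_range_sum_range_eq_sum_filter, sum_filter_of_ne, quadsOfWeight, card_filter,
      sum_product (t := range (N + 1) ×ˢ range (N + 1))]
    · exact sum_congr rfl fun x _ => by rw [card_filter]; rfl
    · intro x _ hx
      obtain ⟨y, hy⟩ := card_ne_zero.mp hx
      rw [mem_filter] at hy
      omega

theorem intCast_b_two_mul (n : ℕ) :
    ((b (2 * n) : ℤ) : ZMod 4) = if IsSquare (4 * n + 1) then 1 else 0 := by
  have hpar := Finset.card_modEq_two_card_filter_fixed (s := quadsOfWeight (2 * n))
    (f := Prod.swap) (fun z hz => mem_quadsOfWeight.mpr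
      ((quadWeight_comm _ _).trans (mem_quadsOfWeight.mp hz))) (fun z _ => z.swap_swap)
  have hA := card_filter_eq_card_divisorsAntidiagonal (2 * n)
  rw [card_filter_swap_eq_self_quadsOfWeight (even_two_mul n)] at hpar
  rw [show 2 * (2 * n) + 1 = 4 * n + 1 by ring] at hA hpar
  rw [intCast_b, hA, Nat.card_divisorsAntidiagonal_eq_two_mul_card_lt_add_ite (by omega)]
  unfold Nat.ModEq at hpar
  split_ifs
  · rw [← Nat.cast_one (R := ZMod 4), ZMod.natCast_eq_natCast_iff']; omega
  · rw [← Nat.cast_zero (R := ZMod 4), ZMod.natCast_eq_natCast_iff']; omega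

theorem b_two_iteration_general (p : ℕ) (hodd : Odd p) :
    ∀ n k : ℕ,
      b (2 * p ^ (2 * k + 2) * n + (p ^ (2 * k + 2) - 1) / 2)
        ≡ (-1 : ℤ) ^ ((k + 1) * (p - 1) / 2) * (p : ℤ) ^ (k + 1) * b (2 * n) [ZMOD 4] := by
  intro n k
  have hE : p ^ (2 * k + 2) = (p ^ (k + 1)) ^ 2 := by rw [← pow_mul]; ring_nf
  obtain ⟨s, hs⟩ := hodd.pow (n := k + 1)
  obtain ⟨r, hr⟩ : ∃ r, (p ^ (k + 1)) ^ 2 = 4 * r + 1 := ⟨s * s + s, by rw [hs]; ring⟩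
  have harg :
      2 * p ^ (2 * k + 2) * n + (p ^ (2 * k + 2) - 1) / 2 = 2 * ((4 * r + 1) * n + r) := by
    rw [hE, hr, show (4 * r + 1 - 1) / 2 = 2 * r by omega]; ring
  have hsq : 4 * ((4 * r + 1) * n + r) + 1 = (p ^ (k + 1)) ^ 2 * (4 * n + 1) := by rw [hr]; ring
  have hunit : (-1 : ZMod 4) ^ ((k + 1) * (p - 1) / 2) * (p : ZMod 4) ^ (k + 1) = 1 := by
    rw [Nat.mul_div_assoc _ (Nat.Odd.sub_odd hodd odd_one).two_dvd, pow_mul', ← mul_pow,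
      ZMod.neg_one_pow_div_two_mul_eq_one hodd, one_pow]
  rw [harg]
  refine (ZMod.intCast_eq_intCast_iff _ _ 4).mp ?_
  push_cast
  rw [intCast_b_two_mul, intCast_b_two_mul, hsq, hunit, one_mul]
  exact if_congr (Nat.isSquare_sq_mul_iff (pow_ne_zero _ hodd.pos.ne')) rfl rfl

/-- Let `p` be an odd prime. Then for all `n, k ≥ 0`,
`b(2·p^{2k+2}·n + (p^{2k+2} − 1)/2) ≡ (−1)^{(k+1)(p−1)/2} · p^{k+1} · b(2n) (mod 4)`. -/
theorem b_two_iteration (p : ℕ) [Fact p.Prime] (hodd : Odd p) :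
    ∀ n k : ℕ,
      b (2 * p ^ (2 * k + 2) * n + (p ^ (2 * k + 2) - 1) / 2)
        ≡ (-1 : ℤ) ^ ((k + 1) * (p - 1) / 2) * (p : ℤ) ^ (k + 1) * b (2 * n) [ZMOD 4] :=
  b_two_iteration_general p hodd
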